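/- arXiv:1902.01794 — 5 statements merged into one kernel-verified Lean document; each statement's English description precedes it below -/
import Mathlib

section
/- For all integers m, n ≥ 1, in the Lie ring L = L_{m,n}(ℤ) the derived subalgebra [L, L] and the center Z(L) = {v ∈ L : [v, L] = 0} both equal the ℤ-span of {z₁,…,zₙ}; in particular [[L, L], L] = 0 and [L, L] ≠ 0, so L is nilpotent of class exactly 2. -/
open scoped BigOperators

/-- `e(m,n) = binom(n+m-2, n-1)`. -/
def eN (m n : ℕ) : ℕ := (n + m - 2).choose (n - 1)

/-- `f(m,n) = binom(n+m-1, n-1)`. -/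
def fN (m n : ℕ) : ℕ := (n + m - 1).choose (n - 1)

/-- `d(m,n) = e(m,n) + f(m,n)`. -/
def dN (m n : ℕ) : ℕ := eN m n + fN m n

/-- `h(m,n) = d(m,n) + n`. -/
def hN (m n : ℕ) : ℕ := dN m n + n

/-- `E(m,n)`, the set of `n`-tuples of nonnegative integers with sum `m-1`. -/
abbrev EIdx (m n : ℕ) := {v : Fin n → ℕ // ∑ i, v i = m - 1}

/-- `F(m,n)`, the set of `n`-tuples of nonnegative integers with sum `m`. -/
abbrev FIdx (m n : ℕ) := {v : Fin n → ℕ // ∑ i, v i = m}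

/-- Index set for the basis `{x_e} ∪ {y_f} ∪ {z_1,…,z_n}` of `L_{m,n}`. -/
abbrev BIdx (m n : ℕ) := EIdx m n ⊕ FIdx m n ⊕ Fin n

/-- `L_{m,n}(R)`: the free `R`-module on the basis `{x_e} ∪ {y_f} ∪ {z_i}`. -/
abbrev Lmn (m n : ℕ) (R : Type*) [CommRing R] := BIdx m n →₀ R

/-- The bracket of two basis elements of `L_{m,n}(R)`:
`[x_e, y_f] = z_i` if `f - e` is the `i`-th standard basis vector, `0` otherwise;
`[y_f, x_e] = -[x_e, y_f]`; all other brackets of basis elements vanish. -/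
noncomputable def brktB {m n : ℕ} {R : Type*} [CommRing R] :
    BIdx m n → BIdx m n → Lmn m n R
  | Sum.inl e, Sum.inr (Sum.inl f) =>
      ∑ i : Fin n,
        if f.1 = e.1 + Pi.single i 1 then Finsupp.single (Sum.inr (Sum.inr i)) 1 else 0
  | Sum.inr (Sum.inl f), Sum.inl e =>
      -∑ i : Fin n,
        if f.1 = e.1 + Pi.single i 1 then Finsupp.single (Sum.inr (Sum.inr i)) 1 else 0
  | _, _ => 0

/-- The `R`-bilinear bracket on `L_{m,n}(R)`, extending `brktB` bilinearly. -/
noncomputable def brk {m n : ℕ} {R : Type*} [CommRing R] (v w : Lmn m n R) : Lmn m n R :=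
  v.sum fun a c => w.sum fun b c' => (c * c') • brktB a b


/-- The central basis elements `z_i` of `L_{m,n}(ℤ)`. -/
noncomputable def zB (m n : ℕ) (i : Fin n) : Lmn m n ℤ :=
  Finsupp.single (Sum.inr (Sum.inr i)) 1
/-!
Each basic bracket `[x_e, y_f]` is `0` or some `z_i`, and the `z_i` bracket trivially with
everything, so `[L, L]` lies in the span of the `z_i`, which is central; conversely
`z_i = [x_e, y_{e + εᵢ}]`. For the reverse inclusion of the center, the `z_i`-coefficient of
`[v, y_{e + εᵢ}]` is the `x_e`-coefficient of `v`, and that of `[v, x_e]` is minus its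
`y_{e + εᵢ}`-coefficient; as every `f ∈ F(m,n)` has the form `e + εᵢ` (here `m ≥ 1`), a central `v`
has no `x`- or `y`-components. Throughout, the span of the `z_i` is identified with the
submodule of vectors supported on the `z`-indices.
-/

def zIdx (m n : ℕ) : Set (BIdx m n) := Set.range fun i => Sum.inr (Sum.inr i)

theorem span_range_zB_eq_supported (m n : ℕ) :
    Submodule.span ℤ (Set.range (zB m n)) = Finsupp.supported ℤ ℤ (zIdx m n) := by
  rw [Finsupp.supported_eq_span_single, zIdx, ← Set.range_comp]
  rfl

section Index
variable {m n : ℕ}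

theorem EIdx.exists_add_single (hm : 1 ≤ m) (e : EIdx m n) (i : Fin n) :
    ∃ f : FIdx m n, f.1 = e.1 + Pi.single i 1 :=
  ⟨⟨e.1 + Pi.single i 1, by simp [Finset.sum_add_distrib, e.2]; omega⟩, rfl⟩

theorem FIdx.exists_eq_add_single (hm : 1 ≤ m) (f : FIdx m n) :
    ∃ (e : EIdx m n) (i : Fin n), f.1 = e.1 + Pi.single i 1 := by
  obtain ⟨i, -, hi⟩ := Finset.exists_ne_zero_of_sum_ne_zero (s := Finset.univ) (f := f.1)
    (by rw [f.2]; omega)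
  have hle : Pi.single i 1 ≤ f.1 := fun j => by
    rcases eq_or_ne j i with rfl | hj <;> simp [*, Nat.one_le_iff_ne_zero]
  have hf : f.1 = (f.1 - Pi.single i 1) + Pi.single i 1 := (tsub_add_cancel_of_le hle).symm
  refine ⟨⟨f.1 - Pi.single i 1, ?_⟩, i, hf⟩
  have hsum := congrArg (fun g : Fin n → ℕ => ∑ j, g j) hf
  simp only [Pi.add_apply, Finset.sum_add_distrib, f.2, Finset.sum_pi_single', Finset.mem_univ,
    if_true] at hsum
  omega

def EIdx.single (i : Fin n) : EIdx m n := ⟨Pi.single i (m - 1), by simp⟩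

end Index

section Bracket
variable {m n : ℕ} {R : Type*} [CommRing R]

theorem brktB_inl_inr_inl_apply (e : EIdx m n) (f : FIdx m n) (i : Fin n) :
    (brktB (Sum.inl e) (Sum.inr (Sum.inl f)) : Lmn m n R) (Sum.inr (Sum.inr i))
      = if f.1 = e.1 + Pi.single i 1 then 1 else 0 := by
  show (∑ j : Fin n, if f.1 = e.1 + Pi.single j 1
      then (Finsupp.single (Sum.inr (Sum.inr j)) 1 : Lmn m n R) else 0) (Sum.inr (Sum.inr i)) = _
  rw [Finset.sum_apply', Finset.sum_eq_single i (fun j _ hj => ?_) (by simp)] <;>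
    split_ifs <;> simp [*]

theorem brktB_inl_inr_inl_of_eq {e : EIdx m n} {f : FIdx m n} {i : Fin n}
    (hf : f.1 = e.1 + Pi.single i 1) :
    (brktB (Sum.inl e) (Sum.inr (Sum.inl f)) : Lmn m n R)
      = Finsupp.single (Sum.inr (Sum.inr i)) 1 := by
  show (∑ j : Fin n, if f.1 = e.1 + Pi.single j 1
      then (Finsupp.single (Sum.inr (Sum.inr j)) 1 : Lmn m n R) else 0) = _
  rw [Finset.sum_eq_single i (fun j _ hj => if_neg ?_) (by simp), if_pos hf]
  rw [hf, add_right_inj]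
  intro h
  exact hj (by simpa [Pi.single_apply, eq_comm] using congrFun h i)

theorem brktB_apply_inr_inl_of_eq {e : EIdx m n} {f : FIdx m n} {i : Fin n}
    (hf : f.1 = e.1 + Pi.single i 1) (a : BIdx m n) :
    (brktB a (Sum.inr (Sum.inl f)) : Lmn m n R) (Sum.inr (Sum.inr i))
      = if a = Sum.inl e then 1 else 0 := by
  rcases a with e' | f' | j
  · simp [brktB_inl_inr_inl_apply, hf, Subtype.ext_iff, eq_comm]
  · rfl
  · rfl

theorem brktB_apply_inl_of_eq {e : EIdx m n} {f : FIdx m n} {i : Fin n}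
    (hf : f.1 = e.1 + Pi.single i 1) (a : BIdx m n) :
    (brktB a (Sum.inl e) : Lmn m n R) (Sum.inr (Sum.inr i))
      = -if a = Sum.inr (Sum.inl f) then 1 else 0 := by
  rcases a with e' | f' | j
  · simp [brktB]
  · change (-brktB (Sum.inl e) (Sum.inr (Sum.inl f')) : Lmn m n R) _ = _
    simp [brktB_inl_inr_inl_apply, ← hf, Subtype.ext_iff]
  · simp [brktB]

theorem brk_single_one_apply (v : Lmn m n R) (b k : BIdx m n) :
    brk v (Finsupp.single b 1) k = v.sum fun a c => c * brktB a b k := by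
  simp [brk, Finsupp.sum_apply]

theorem brk_single_inr_inl_apply {e : EIdx m n} {f : FIdx m n} {i : Fin n}
    (hf : f.1 = e.1 + Pi.single i 1) (v : Lmn m n R) :
    brk v (Finsupp.single (Sum.inr (Sum.inl f)) 1) (Sum.inr (Sum.inr i)) = v (Sum.inl e) := by
  simp_rw [brk_single_one_apply, brktB_apply_inr_inl_of_eq hf, mul_ite, mul_one, mul_zero]
  exact Finsupp.sum_ite_self_eq' v _

theorem brk_single_inl_apply {e : EIdx m n} {f : FIdx m n} {i : Fin n}
    (hf : f.1 = e.1 + Pi.single i 1) (v : Lmn m n R) :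
    brk v (Finsupp.single (Sum.inl e) 1) (Sum.inr (Sum.inr i)) = -v (Sum.inr (Sum.inl f)) := by
  simp_rw [brk_single_one_apply, brktB_apply_inl_of_eq hf, mul_neg, mul_ite, mul_one,
    mul_zero, Finsupp.sum, Finset.sum_neg_distrib]
  exact congrArg Neg.neg (Finsupp.sum_ite_self_eq' v _)

theorem brktB_mem_supported (a b : BIdx m n) :
    (brktB a b : Lmn m n R) ∈ Finsupp.supported R R (zIdx m n) := by
  have hxy (e : EIdx m n) (f : FIdx m n) :
      (brktB (Sum.inl e) (Sum.inr (Sum.inl f)) : Lmn m n R) ∈ Finsupp.supported R R (zIdx m n) :=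
    Submodule.sum_mem _ fun j _ => by
      split_ifs
      · exact Finsupp.single_mem_supported R 1 ⟨j, rfl⟩
      · exact Submodule.zero_mem _
  rcases a with e | f | i <;> rcases b with e' | f' | i' <;> try exact Submodule.zero_mem _
  · exact hxy e f'
  · exact Submodule.neg_mem _ (hxy e' f)

theorem brk_mem_supported (u v : Lmn m n R) : brk u v ∈ Finsupp.supported R R (zIdx m n) :=
  Submodule.sum_mem _ fun a _ => Submodule.sum_mem _ fun b _ =>
    Submodule.smul_mem _ _ (brktB_mem_supported a b)

theorem brk_eq_zero_of_mem_supported {v : Lmn m n R} (hv : v ∈ Finsupp.supported R R (zIdx m n))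
    (w : Lmn m n R) : brk v w = 0 := by
  refine Finset.sum_eq_zero fun a ha => Finset.sum_eq_zero fun b _ => ?_
  obtain ⟨i, rfl⟩ := (Finsupp.mem_supported R v).mp hv ha
  rcases b with e | f | j <;> exact smul_zero _

theorem mem_supported_of_forall_brk_eq_zero (hm : 1 ≤ m) (hn : 1 ≤ n) {v : Lmn m n R}
    (hv : ∀ w, brk v w = 0) : v ∈ Finsupp.supported R R (zIdx m n) := by
  rw [Finsupp.mem_supported']
  rintro (e | f | i) hz
  · obtain ⟨i⟩ := Fin.pos_iff_nonempty.mp hn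
    obtain ⟨f, hf⟩ := e.exists_add_single hm i
    simpa [hv] using (brk_single_inr_inl_apply hf v).symm
  · obtain ⟨e, i, hf⟩ := FIdx.exists_eq_add_single hm f
    simpa [hv] using brk_single_inl_apply hf v
  · exact absurd ⟨i, rfl⟩ hz

theorem brk_single_inl_single_inr_inl {e : EIdx m n} {f : FIdx m n} {i : Fin n}
    (hf : f.1 = e.1 + Pi.single i 1) :
    brk (Finsupp.single (Sum.inl e) 1) (Finsupp.single (Sum.inr (Sum.inl f)) 1 : Lmn m n R)
      = Finsupp.single (Sum.inr (Sum.inr i)) 1 := by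
  simp [brk, brktB_inl_inr_inl_of_eq hf]

theorem span_brk_eq_supported (hm : 1 ≤ m) :
    Submodule.span R {x : Lmn m n R | ∃ u v, x = brk u v} = Finsupp.supported R R (zIdx m n) := by
  refine le_antisymm (Submodule.span_le.mpr ?_) ?_
  · rintro _ ⟨u, v, rfl⟩
    exact brk_mem_supported u v
  · rw [Finsupp.supported_eq_span_single]
    refine Submodule.span_mono ?_
    rintro _ ⟨_, ⟨i, rfl⟩, rfl⟩
    obtain ⟨f, hf⟩ := (EIdx.single i : EIdx m n).exists_add_single hm i
    exact ⟨_, _, (brk_single_inl_single_inr_inl hf).symm⟩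

theorem center_eq_supported (hm : 1 ≤ m) (hn : 1 ≤ n) :
    {v : Lmn m n R | ∀ w, brk v w = 0} = Finsupp.supported R R (zIdx m n) :=
  Set.ext fun _ => ⟨mem_supported_of_forall_brk_eq_zero hm hn, brk_eq_zero_of_mem_supported⟩

theorem exists_brk_ne_zero [Nontrivial R] (hm : 1 ≤ m) (hn : 1 ≤ n) :
    ∃ u v : Lmn m n R, brk u v ≠ 0 := by
  obtain ⟨i⟩ := Fin.pos_iff_nonempty.mp hn
  obtain ⟨f, hf⟩ := (EIdx.single i : EIdx m n).exists_add_single hm i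
  refine ⟨Finsupp.single (Sum.inl (EIdx.single i)) 1, Finsupp.single (Sum.inr (Sum.inl f)) 1, ?_⟩
  rw [brk_single_inl_single_inr_inl hf]
  exact Finsupp.single_ne_zero.mpr one_ne_zero

end Bracket

theorem stmt1 (m n : ℕ) (hm : 1 ≤ m) (hn : 1 ≤ n) :
    Submodule.span ℤ {x : Lmn m n ℤ | ∃ u v : Lmn m n ℤ, x = brk u v}
      = Submodule.span ℤ (Set.range (zB m n)) ∧
    {v : Lmn m n ℤ | ∀ w : Lmn m n ℤ, brk v w = 0}
      = (Submodule.span ℤ (Set.range (zB m n)) : Set (Lmn m n ℤ)) ∧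
    (∀ u v w : Lmn m n ℤ, brk (brk u v) w = 0) ∧
    (∃ u v : Lmn m n ℤ, brk u v ≠ 0) := by
  rw [span_range_zB_eq_supported]
  exact ⟨span_brk_eq_supported hm, center_eq_supported hm hn,
    fun u v => brk_eq_zero_of_mem_supported (brk_mem_supported u v), exists_brk_ne_zero hm hn⟩
end

section
/- Let m, n ≥ 1 be integers, let 𝔬 be a discrete valuation ring with maximal ideal 𝔭, let N ≥ 1 and R = 𝔬/𝔭^N, and let y ∈ Rⁿ be a vector at least one of whose coordinates is a unit of R. Then there exist U, V ∈ GL_{d(m,n)}(R) such that U·M_{m,n}(y)·V equals the d(m,n) × d(m,n) matrix whose upper-left 2e(m,n) × 2e(m,n) corner is the block matrix [[0, −Id_{e(m,n)}],[Id_{e(m,n)}, 0]] and all of whose other entries are 0. -/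
/-!
`B_{m,n}(y)` has an invertible maximal minor. If `y₁` is a unit, the top square block of
`B_{m,n}` is lower triangular with diagonal `y₁`. Otherwise some later `yᵢ` is a unit, so by
induction on `n` each subdiagonal block `B_{j,n-1}(y₂,…,yₙ)` has an invertible maximal minor; taking
those rows in the row block below each column block gives a block upper triangular minor whose
diagonal blocks are these minors.

Row reduction against such a minor gives an invertible `P` with `P B = [1; 0]`, and then
`diag(1, P) · M · diag(1, Pᵀ) = [[0, -(PB)ᵀ], [PB, 0]]` is the normal form.
-/

open scoped BigOperators

/-- Entries of the recursively defined block matrix `B_{m,n}(y)`.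
`Bent n m y r c` is the `(r,c)` entry (indices `0`-based) of `B_{m,n}(y 0, …, y (n-1))`.
For `n = 1`, `B_{m,1}(Y₁)` is the `1×1` matrix `(Y₁)`.  For `n ≥ 2`, `B_{m,n}` has row
blocks `i = 1,…,m+1` of heights `e(i,n-1)` (so block `i` starts at row `e(i-1,n)`,
using `∑_{i'<i} e(i',n-1) = e(i-1,n)`), column blocks `j = 1,…,m` of widths `e(j,n-1)`
(block `j` starting at column `e(j-1,n)`); the diagonal blocks `(j,j)` are
`Y₁·Id_{e(j,n-1)}`, the subdiagonal blocks `(j+1,j)` are `B_{j,n-1}(Y₂,…,Yₙ)`, and all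
other blocks vanish. -/
def Bent {R : Type*} [CommRing R] : ℕ → ℕ → (ℕ → R) → ℕ → ℕ → R
  | 0, _, _, _, _ => 0
  | 1, _, y, r, c => if r = 0 ∧ c = 0 then y 0 else 0
  | n + 2, m, y, r, c =>
      -- `i`, `j` are the (1-based) indices of the row resp. column block containing
      -- row `r` resp. column `c`.
      let i := ((Finset.range (m + 2)).filter fun k => eN k (n + 2) ≤ r).card
      let j := ((Finset.range (m + 1)).filter fun k => eN k (n + 2) ≤ c).card
      if i = j then
        (if r - eN (i - 1) (n + 2) = c - eN (j - 1) (n + 2) then y 0 else 0)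
      else if i = j + 1 then
        Bent (n + 1) j (fun k => y (k + 1)) (r - eN j (n + 2)) (c - eN (j - 1) (n + 2))
      else 0

/-- Extend `y : Fin n → R` to `ℕ → R` by zero. -/
def pad {R : Type*} [Zero R] {n : ℕ} (y : Fin n → R) : ℕ → R :=
  fun k => if h : k < n then y ⟨k, h⟩ else 0

/-- The `f(m,n) × e(m,n)` matrix `B_{m,n}(y)` over `R`. -/
def Bmat {R : Type*} [CommRing R] (m n : ℕ) (y : Fin n → R) :
    Matrix (Fin (fN m n)) (Fin (eN m n)) R :=
  Matrix.of fun r c => Bent n m (pad y) (r : ℕ) (c : ℕ)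

/-- The `d(m,n) × d(m,n)` commutator matrix
`M_{m,n}(y) = [[0, -B_{m,n}(y)ᵀ], [B_{m,n}(y), 0]]`, the diagonal zero blocks having
sizes `e(m,n)` and `f(m,n)`. -/
def Mmat {R : Type*} [CommRing R] (m n : ℕ) (y : Fin n → R) :
    Matrix (Fin (dN m n)) (Fin (dN m n)) R :=
  Matrix.of fun i j =>
    if (i : ℕ) < eN m n ∧ eN m n ≤ (j : ℕ) then
      -(Bent n m (pad y) ((j : ℕ) - eN m n) (i : ℕ))
    else if eN m n ≤ (i : ℕ) ∧ (j : ℕ) < eN m n then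
      Bent n m (pad y) ((i : ℕ) - eN m n) ((j : ℕ))
    else 0

lemma fN_eq_eN_succ (m n : ℕ) : fN m n = eN (m + 1) n := by
  unfold eN fN; congr 1

lemma val_lt_eN_succ {k n : ℕ} (t : Fin (fN k n)) : (t : ℕ) < eN (k + 1) n :=
  fN_eq_eN_succ k n ▸ t.isLt

lemma eN_le_fN (m n : ℕ) : eN m n ≤ fN m n :=
  Nat.choose_le_choose _ (by omega)

lemma eN_one (m : ℕ) : eN m 1 = 1 := Nat.choose_zero_right _

lemma fN_one (m : ℕ) : fN m 1 = 1 := Nat.choose_zero_right _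

lemma eN_zero_add_two (n : ℕ) : eN 0 (n + 2) = 0 :=
  Nat.choose_eq_zero_of_lt (by omega)

lemma eN_succ_add_two (k n : ℕ) : eN (k + 1) (n + 2) = eN k (n + 2) + eN (k + 1) (n + 1) := by
  unfold eN
  rw [show n + 2 + (k + 1) - 2 = n + k + 1 by omega, show n + 2 - 1 = n + 1 by omega,
    Nat.choose_succ_succ', show n + 2 + k - 2 = n + k by omega,
    show n + 1 + (k + 1) - 2 = n + k by omega, show n + 1 - 1 = n by omega, add_comm]

lemma eN_add_one_pos (k n : ℕ) : 0 < eN (k + 1) (n + 1) :=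
  Nat.choose_pos (by omega)

lemma strictMono_eN_add_two (n : ℕ) : StrictMono fun k => eN k (n + 2) :=
  strictMono_nat_of_lt_succ fun k => by
    simp only [eN_succ_add_two k n]; have := eN_add_one_pos k n; omega

lemma lt_eN_succ_add_two (n r : ℕ) : r < eN (r + 1) (n + 2) :=
  Nat.lt_of_lt_of_le (Nat.lt_succ_self r) ((strictMono_eN_add_two n).id_le (r + 1))

/-- `r` lies in `[e(a, n+2), e(a+1, n+2))` for `a = blockOf n r`; these intervals are the row and
column blocks of `B_{m,n+2}`. -/
def blockOf (n r : ℕ) : ℕ :=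
  Nat.find (⟨r, lt_eN_succ_add_two n r⟩ : ∃ a, r < eN (a + 1) (n + 2))

def blockOffset (n r : ℕ) : ℕ := r - eN (blockOf n r) (n + 2)

section Blocks

variable {n : ℕ}

lemma lt_eN_blockOf_succ (r : ℕ) : r < eN (blockOf n r + 1) (n + 2) :=
  Nat.find_spec (⟨r, lt_eN_succ_add_two n r⟩ : ∃ a, r < eN (a + 1) (n + 2))

lemma eN_succ_le_of_lt_blockOf {k r : ℕ} (hk : k < blockOf n r) : eN (k + 1) (n + 2) ≤ r :=
  not_lt.1 (Nat.find_min (⟨r, lt_eN_succ_add_two n r⟩ : ∃ a, r < eN (a + 1) (n + 2)) hk)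

lemma eN_le_iff_le_blockOf {k r : ℕ} : eN k (n + 2) ≤ r ↔ k ≤ blockOf n r := by
  constructor
  · intro hk
    by_contra! hlt
    have := (strictMono_eN_add_two n).monotone (show blockOf n r + 1 ≤ k by omega)
    have := lt_eN_blockOf_succ (n := n) r
    omega
  · intro hk
    rcases k with _ | k
    · simp [eN_zero_add_two]
    · exact eN_succ_le_of_lt_blockOf hk

lemma blockOf_lt_iff {a r : ℕ} : blockOf n r < a ↔ r < eN a (n + 2) := by
  rw [← not_le, ← eN_le_iff_le_blockOf, not_le]

lemma eN_blockOf_le (r : ℕ) : eN (blockOf n r) (n + 2) ≤ r :=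
  eN_le_iff_le_blockOf.2 le_rfl

lemma blockOf_mono : Monotone (blockOf n) := fun _ _ h =>
  eN_le_iff_le_blockOf.1 ((eN_blockOf_le _).trans h)

lemma blockOf_eN_add {a t : ℕ} (ht : t < eN (a + 1) (n + 1)) :
    blockOf n (eN a (n + 2) + t) = a := by
  refine le_antisymm (Nat.le_of_lt_succ (blockOf_lt_iff.2 ?_))
    (eN_le_iff_le_blockOf.1 (Nat.le_add_right _ _))
  rw [eN_succ_add_two]; omega

lemma eN_blockOf_add_blockOffset (r : ℕ) : eN (blockOf n r) (n + 2) + blockOffset n r = r :=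
  Nat.add_sub_of_le (eN_blockOf_le r)

lemma blockOffset_lt (r : ℕ) : blockOffset n r < eN (blockOf n r + 1) (n + 1) := by
  have := lt_eN_blockOf_succ (n := n) r
  have := eN_blockOf_le (n := n) r
  rw [eN_succ_add_two] at *
  unfold blockOffset; omega

lemma blockOffset_eN_add {a t : ℕ} (ht : t < eN (a + 1) (n + 1)) :
    blockOffset n (eN a (n + 2) + t) = t := by
  rw [blockOffset, blockOf_eN_add ht, Nat.add_sub_cancel_left]

lemma card_filter_eN_le {M r : ℕ} (hr : r < eN M (n + 2)) :
    ((Finset.range (M + 1)).filter fun k => eN k (n + 2) ≤ r).card = blockOf n r + 1 := by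
  have hlt := blockOf_lt_iff.2 hr
  rw [← Finset.card_range (blockOf n r + 1)]
  congr 1
  ext k
  simp only [Finset.mem_filter, Finset.mem_range, eN_le_iff_le_blockOf]
  omega

def blockEquiv {m a : ℕ} (ha : a < m) :
    {c : Fin (eN m (n + 2)) // blockOf n c = a} ≃ Fin (eN (a + 1) (n + 1)) where
  toFun c := ⟨blockOffset n c, by simpa only [c.2] using blockOffset_lt (n := n) (c : ℕ)⟩
  invFun t := ⟨⟨eN a (n + 2) + t, blockOf_lt_iff.1 ((blockOf_eN_add t.isLt).symm ▸ ha)⟩,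
    blockOf_eN_add t.isLt⟩
  left_inv c := by
    ext
    simp only
    conv_rhs => rw [← eN_blockOf_add_blockOffset (n := n) c, c.2]
  right_inv t := Fin.ext (blockOffset_eN_add t.isLt)

end Blocks

section Minors

variable {R : Type*} [CommRing R]

lemma Bent_add_two_apply {n m r c : ℕ} (y : ℕ → R) (hr : r < fN m (n + 2))
    (hc : c < eN m (n + 2)) :
    Bent (n + 2) m y r c =
      if blockOf n r = blockOf n c then
        (if blockOffset n r = blockOffset n c then y 0 else 0)
      else if blockOf n r = blockOf n c + 1 then
        Bent (n + 1) (blockOf n c + 1) (fun k => y (k + 1)) (blockOffset n r) (blockOffset n c)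
      else 0 := by
  rw [fN_eq_eN_succ] at hr
  simp only [Bent, card_filter_eN_le hr, card_filter_eN_le hc, Nat.add_sub_cancel,
    Nat.add_right_cancel_iff, blockOffset]
  split_ifs <;> simp_all

lemma pad_zero {n : ℕ} (y : Fin (n + 1) → R) : pad y 0 = y 0 := by
  simp [pad]

lemma pad_tail {n : ℕ} (y : Fin (n + 1) → R) : pad (Fin.tail y) = fun k => pad y (k + 1) := by
  funext k
  by_cases hk : k < n <;> simp [pad, Fin.tail, hk]

lemma isUnit_det_Bmat_one {m : ℕ} (φ : Fin (eN m 1) ↪ Fin (fN m 1)) (y : Fin 1 → R)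
    (hy : IsUnit (y 0)) : IsUnit ((Bmat m 1 y).submatrix φ id).det := by
  have he := eN_one m
  have hf := fN_one m
  let c₀ : Fin (eN m 1) := ⟨0, by omega⟩
  have hr : ((φ c₀ : Fin (fN m 1)) : ℕ) = 0 := by have := (φ c₀).isLt; omega
  rw [Matrix.det_eq_elem_of_card_eq_one (by rw [Fintype.card_fin, he]) c₀]
  simpa [Bmat, Bent, hr, c₀, pad_zero] using hy

lemma isUnit_det_Bmat_castLE {n m : ℕ} (y : Fin (n + 2) → R) (hy : IsUnit (y 0)) :
    IsUnit ((Bmat m (n + 2) y).submatrix (Fin.castLEEmb (eN_le_fN m (n + 2))) id).det := by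
  set A := (Bmat m (n + 2) y).submatrix (Fin.castLEEmb (eN_le_fN m (n + 2))) id
  have hA : ∀ r c, A r c = Bent (n + 2) m (pad y) r c := fun _ _ => rfl
  have hr : ∀ r : Fin (eN m (n + 2)), (r : ℕ) < fN m (n + 2) :=
    fun r => r.isLt.trans_le (eN_le_fN m (n + 2))
  have hlower : A.IsLowerTriangular := by
    intro r c (hrc : r < c)
    have hmono := blockOf_mono (n := n) hrc.le
    have hr' := eN_blockOf_add_blockOffset (n := n) r
    have hc' := eN_blockOf_add_blockOffset (n := n) c
    rw [hA, Bent_add_two_apply _ (hr r) c.isLt]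
    split_ifs with hblock
    · rw [hblock] at hr'; omega
    · rfl
    · omega
    · rfl
  have hdiag : ∀ r, A r r = y 0 := fun r => by
    rw [hA, Bent_add_two_apply _ (hr r) r.isLt, if_pos rfl, if_pos rfl, pad_zero]
  rw [Matrix.det_of_isLowerTriangular A hlower, Finset.prod_congr rfl fun r _ => hdiag r,
    Finset.prod_const]
  exact hy.pow _

section Subdiagonal

variable {n : ℕ} (Φ : ∀ b : ℕ, Fin (eN (b + 1) (n + 1)) ↪ Fin (fN (b + 1) (n + 1)))

def subdiagRow (c : ℕ) : ℕ :=
  eN (blockOf n c + 1) (n + 2) + Φ (blockOf n c) ⟨blockOffset n c, blockOffset_lt c⟩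

lemma blockOf_subdiagRow (c : ℕ) : blockOf n (subdiagRow Φ c) = blockOf n c + 1 :=
  blockOf_eN_add (val_lt_eN_succ _)

lemma blockOffset_subdiagRow (c : ℕ) :
    blockOffset n (subdiagRow Φ c) = Φ (blockOf n c) ⟨blockOffset n c, blockOffset_lt c⟩ :=
  blockOffset_eN_add (val_lt_eN_succ _)

lemma subdiagRow_lt {m c : ℕ} (hc : c < eN m (n + 2)) : subdiagRow Φ c < fN m (n + 2) := by
  have hlt : blockOf n (subdiagRow Φ c) < m + 1 := by
    rw [blockOf_subdiagRow]; exact Nat.add_lt_add_right (blockOf_lt_iff.2 hc) 1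
  rwa [blockOf_lt_iff, ← fN_eq_eN_succ] at hlt

lemma subdiagRow_injective : Function.Injective (subdiagRow Φ) := by
  intro c c' h
  have hblock : blockOf n c = blockOf n c' := by
    have := blockOf_subdiagRow Φ c
    rw [h, blockOf_subdiagRow] at this
    omega
  have hoffset : blockOffset n c = blockOffset n c' := by
    have hΦ := blockOffset_subdiagRow Φ c
    rw [h, blockOffset_subdiagRow] at hΦ
    have hΦ_inj : ∀ a b s t (hs : s < eN (a + 1) (n + 1)) (ht : t < eN (b + 1) (n + 1)),
        a = b → (Φ a ⟨s, hs⟩ : ℕ) = Φ b ⟨t, ht⟩ → s = t := by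
      rintro a _ s t hs ht rfl hst
      exact Fin.mk.inj_iff.1 ((Φ a).injective (Fin.ext hst))
    exact hΦ_inj _ _ _ _ _ _ hblock hΦ.symm
  rw [← eN_blockOf_add_blockOffset (n := n) c, ← eN_blockOf_add_blockOffset (n := n) c',
    hblock, hoffset]

def subdiagEmb (m : ℕ) : Fin (eN m (n + 2)) ↪ Fin (fN m (n + 2)) where
  toFun c := ⟨subdiagRow Φ c, subdiagRow_lt Φ c.isLt⟩
  inj' _ _ h := Fin.ext (subdiagRow_injective Φ (Fin.mk.inj_iff.1 h))

lemma isUnit_det_Bmat_subdiagEmb {m : ℕ} (y : Fin (n + 2) → R)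
    (hΦ : ∀ b, IsUnit ((Bmat (b + 1) (n + 1) (Fin.tail y)).submatrix (Φ b) id).det) :
    IsUnit ((Bmat m (n + 2) y).submatrix (subdiagEmb Φ m) id).det := by
  set A := (Bmat m (n + 2) y).submatrix (subdiagEmb Φ m) id
  have hA : ∀ r c, A r c = Bent (n + 2) m (pad y) (subdiagRow Φ r) c := fun _ _ => rfl
  have hupper : A.BlockTriangular fun c => blockOf n c := by
    intro r c (h : blockOf n c < blockOf n r)
    rw [hA, Bent_add_two_apply _ (subdiagRow_lt Φ r.isLt) c.isLt, blockOf_subdiagRow,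
      if_neg (by omega), if_neg (by omega)]
  rw [hupper.det, IsUnit.prod_iff]
  intro a ha
  have ham : a < m := by
    obtain ⟨c, -, rfl⟩ := Finset.mem_image.1 ha
    exact blockOf_lt_iff.2 c.isLt
  have hblock : A.toSquareBlock (fun c => blockOf n c) a =
      ((Bmat (a + 1) (n + 1) (Fin.tail y)).submatrix (Φ a) id).submatrix
        (blockEquiv ham) (blockEquiv ham) := by
    ext ⟨r, hr⟩ ⟨c, hc⟩
    subst hr
    change Bent (n + 2) m (pad y) (subdiagRow Φ r) c =
      Bent (n + 1) (blockOf n r + 1) (pad (Fin.tail y))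
        (Φ (blockOf n r) ⟨blockOffset n r, blockOffset_lt (r : ℕ)⟩) (blockOffset n c)
    rw [Bent_add_two_apply _ (subdiagRow_lt Φ r.isLt) c.isLt, blockOf_subdiagRow, hc,
      if_neg (by omega), if_pos rfl, blockOffset_subdiagRow, pad_tail]
  rw [hblock, Matrix.det_submatrix_equiv_self]
  exact hΦ a

end Subdiagonal

theorem exists_isUnit_det_submatrix_Bmat :
    ∀ {n : ℕ} (m : ℕ) (y : Fin n → R), (∃ i, IsUnit (y i)) →
      ∃ φ : Fin (eN m n) ↪ Fin (fN m n), IsUnit ((Bmat m n y).submatrix φ id).det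
  | 0, _, _, ⟨i, _⟩ => i.elim0
  | 1, m, y, ⟨i, hi⟩ =>
    ⟨Fin.castLEEmb (eN_le_fN m 1), isUnit_det_Bmat_one _ y (Subsingleton.elim i 0 ▸ hi)⟩
  | n + 2, m, y, ⟨i, hi⟩ => by
    by_cases h0 : IsUnit (y 0)
    · exact ⟨_, isUnit_det_Bmat_castLE y h0⟩
    · obtain ⟨j, rfl⟩ := Fin.exists_succ_eq.2 (show i ≠ 0 by rintro rfl; exact h0 hi)
      choose Φ hΦ using fun b => exists_isUnit_det_submatrix_Bmat (b + 1) (Fin.tail y) ⟨j, hi⟩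
      exact ⟨_, isUnit_det_Bmat_subdiagEmb Φ y hΦ⟩

end Minors

section LinearAlgebra

open Matrix

variable {m n R : Type*} [Fintype m] [Fintype n] [DecidableEq m] [DecidableEq n] [CommRing R]

/-- With `A` the rows of `B` picked by `φ` and `D` the others, `[[A⁻¹, 0], [-D A⁻¹, 1]]` sends
`[A; D]` to `[1; 0]`. -/
lemma exists_isUnit_det_mul_eq_one_submatrix_self (B : Matrix m n R) (φ : n ↪ m)
    (hB : IsUnit (B.submatrix φ id).det) :
    ∃ P : Matrix m m R, IsUnit P.det ∧ P * B = (1 : Matrix m m R).submatrix id φ := by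
  classical
  let α : n ⊕ ↥(Set.range φ)ᶜ ≃ m :=
    ((Equiv.ofInjective φ φ.injective).sumCongr (Equiv.refl _)).trans
      (Equiv.sumCompl (· ∈ Set.range φ))
  set A := B.submatrix φ id
  set D := B.submatrix (fun k : ↥(Set.range φ)ᶜ => (k : m)) id
  have hBα : B.submatrix α id = fromRows A D := by
    ext (j | k) c <;> rfl
  set P₀ : Matrix (n ⊕ ↥(Set.range φ)ᶜ) (n ⊕ ↥(Set.range φ)ᶜ) R :=
    fromBlocks A⁻¹ 0 (-(D * A⁻¹)) 1
  have hP₀ : P₀ * fromRows A D = fromRows 1 0 := by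
    rw [fromBlocks_mul_fromRows, nonsing_inv_mul A hB, Matrix.neg_mul, Matrix.mul_assoc,
      nonsing_inv_mul A hB]
    simp
  refine ⟨P₀.submatrix α.symm α.symm, ?_, ?_⟩
  · rw [det_submatrix_equiv_self, det_fromBlocks_zero₁₂, det_one, mul_one]
    exact isUnit_nonsing_inv_det A hB
  · have hB' : B = (B.submatrix α id).submatrix α.symm id := by simp
    rw [hB', submatrix_mul_equiv, hBα, hP₀]
    ext i j
    obtain ⟨j' | k, rfl⟩ := α.surjective i <;>
      simp only [submatrix_apply, Equiv.symm_apply_apply, fromRows_apply_inl, fromRows_apply_inr,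
        id, Matrix.zero_apply]
    · simp only [one_apply, show α (.inl j') = φ j' from rfl, id, φ.injective.eq_iff]
    · exact (one_apply_ne fun h => k.2 ⟨j, h.symm⟩).symm

lemma exists_isUnit_det_mul_eq_one_submatrix (B : Matrix m n R) (φ ψ : n ↪ m)
    (hB : IsUnit (B.submatrix φ id).det) :
    ∃ P : Matrix m m R, IsUnit P.det ∧ P * B = (1 : Matrix m m R).submatrix id ψ := by
  obtain ⟨σ, hσ⟩ := Equiv.Perm.exists_extending_pair φ ψ φ.injective ψ.injective
  obtain ⟨P, hP, hPB⟩ := exists_isUnit_det_mul_eq_one_submatrix_self B φ hB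
  refine ⟨P.submatrix σ.symm id, ?_, ?_⟩
  · rw [det_permute]
    exact ((Equiv.Perm.sign σ.symm).isUnit.map (Int.castRingHom R)).mul hP
  · rw [← submatrix_id_id B, ← submatrix_mul _ _ _ _ _ Function.bijective_id, hPB]
    ext i j
    simp [one_apply, ← hσ, Equiv.symm_apply_eq]

lemma fromBlocks_one_mul_skew_mul (P : Matrix m m R) (B : Matrix m n R) :
    fromBlocks 1 0 0 P * fromBlocks 0 (-Bᵀ) B 0 * fromBlocks 1 0 0 Pᵀ =
      fromBlocks 0 (-(P * B)ᵀ) (P * B) 0 := by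
  simp [fromBlocks_multiply, transpose_mul]

end LinearAlgebra

/-- `[[0, -1, 0], [1, 0, 0], [0, 0, 0]]`, with diagonal blocks of sizes `e`, `e` and `f - e`. -/
def skewNormalForm (R : Type*) [Ring R] (e f : ℕ) : Matrix (Fin (e + f)) (Fin (e + f)) R :=
  Matrix.of fun i j =>
    if (i : ℕ) < e ∧ (j : ℕ) = (i : ℕ) + e then -1
    else if (j : ℕ) < e ∧ (i : ℕ) = (j : ℕ) + e then 1
    else 0

section NormalForm

open Matrix

variable {R : Type*} [CommRing R]

lemma skewNormalForm_eq_reindex {e f : ℕ} (h : e ≤ f) :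
    skewNormalForm R e f = reindex finSumFinEquiv finSumFinEquiv
      (fromBlocks 0 (-((1 : Matrix (Fin f) (Fin f) R).submatrix id (Fin.castLEEmb h))ᵀ)
        ((1 : Matrix (Fin f) (Fin f) R).submatrix id (Fin.castLEEmb h)) 0) := by
  ext i j
  induction i using Fin.addCases <;> induction j using Fin.addCases <;>
    simp [skewNormalForm, one_apply, Fin.ext_iff] <;> grind

theorem exists_mul_skew_mul_eq_skewNormalForm {e f : ℕ} (h : e ≤ f)
    (B : Matrix (Fin f) (Fin e) R) (φ : Fin e ↪ Fin f) (hB : IsUnit (B.submatrix φ id).det) :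
    ∃ U V : Matrix (Fin (e + f)) (Fin (e + f)) R, IsUnit U.det ∧ IsUnit V.det ∧
      U * reindex finSumFinEquiv finSumFinEquiv (fromBlocks 0 (-Bᵀ) B 0) * V =
        skewNormalForm R e f := by
  obtain ⟨P, hP, hPB⟩ := exists_isUnit_det_mul_eq_one_submatrix B φ (Fin.castLEEmb h) hB
  refine ⟨reindex finSumFinEquiv finSumFinEquiv (fromBlocks 1 0 0 P),
    reindex finSumFinEquiv finSumFinEquiv (fromBlocks 1 0 0 Pᵀ), ?_, ?_, ?_⟩
  · simpa [det_fromBlocks_zero₂₁] using hP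
  · simpa [det_fromBlocks_zero₂₁] using hP
  · rw [skewNormalForm_eq_reindex h, ← hPB, ← fromBlocks_one_mul_skew_mul]
    simp only [reindex_apply, submatrix_mul_equiv]

lemma Mmat_eq_reindex (m n : ℕ) (y : Fin n → R) :
    Mmat m n y = reindex finSumFinEquiv finSumFinEquiv
      (fromBlocks 0 (-(Bmat m n y)ᵀ) (Bmat m n y) 0) := by
  ext i j
  unfold Mmat
  erw [of_apply]
  induction i using Fin.addCases <;> induction j using Fin.addCases <;>
    simp [Bmat, not_le_of_gt (Fin.is_lt _)]

end NormalForm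

theorem stmt5_general (m n : ℕ)
    (𝔬 : Type*) [CommRing 𝔬] [IsDomain 𝔬] [IsDiscreteValuationRing 𝔬]
    (N : ℕ)
    (y : Fin n → 𝔬 ⧸ (IsLocalRing.maximalIdeal 𝔬 ^ N))
    (hy : ∃ i : Fin n, IsUnit (y i)) :
    ∃ U V : Matrix (Fin (dN m n)) (Fin (dN m n)) (𝔬 ⧸ (IsLocalRing.maximalIdeal 𝔬 ^ N)),
      IsUnit U.det ∧ IsUnit V.det ∧
      U * Mmat m n y * V =
        Matrix.of (fun (i j : Fin (dN m n)) =>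
          if (i : ℕ) < eN m n ∧ (j : ℕ) = (i : ℕ) + eN m n then -1
          else if (j : ℕ) < eN m n ∧ (i : ℕ) = (j : ℕ) + eN m n then 1
          else 0) := by
  obtain ⟨φ, hφ⟩ := exists_isUnit_det_submatrix_Bmat m y hy
  rw [Mmat_eq_reindex]
  exact exists_mul_skew_mul_eq_skewNormalForm (eN_le_fN m n) _ φ hφ

theorem stmt5 (m n : ℕ) (hm : 1 ≤ m) (hn : 1 ≤ n)
    (𝔬 : Type*) [CommRing 𝔬] [IsDomain 𝔬] [IsDiscreteValuationRing 𝔬]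
    (N : ℕ) (hN1 : 1 ≤ N)
    (y : Fin n → 𝔬 ⧸ (IsLocalRing.maximalIdeal 𝔬 ^ N))
    (hy : ∃ i : Fin n, IsUnit (y i)) :
    ∃ U V : Matrix (Fin (dN m n)) (Fin (dN m n)) (𝔬 ⧸ (IsLocalRing.maximalIdeal 𝔬 ^ N)),
      IsUnit U.det ∧ IsUnit V.det ∧
      U * Mmat m n y * V =
        Matrix.of (fun (i j : Fin (dN m n)) =>
          if (i : ℕ) < eN m n ∧ (j : ℕ) = (i : ℕ) + eN m n then -1
          else if (j : ℕ) < eN m n ∧ (i : ℕ) = (j : ℕ) + eN m n then 1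
          else 0) :=
  stmt5_general m n 𝔬 N y hy
end

section
/- Let 𝔬 be a discrete valuation ring and n ≥ 1. For every α ∈ GLₙ(𝔬) there exist a permutation matrix P ∈ GLₙ(𝔬) and a lower-triangular matrix b ∈ GLₙ(𝔬) such that the matrix α₀ := P·α·b satisfies: (α₀)_{j,k} = 0 whenever j + k ≤ n, and the antidiagonal entries (α₀)_{j,n+1−j} are units of 𝔬 for all j ∈ {1,…,n}. -/
/-!
Over a local ring, the last column of an invertible matrix contains a unit, say in row `i`.
Adding multiples of the last column to the earlier ones (a lower unitriangular column operation)
clears the rest of row `i`. Expanding the determinant along row `i` shows that the minor without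
row `i` and the last column is again invertible, so induction puts it in antitriangular form;
making row `i` the first row then yields the antitriangular form of the whole matrix.
-/

open Equiv OrderDual

namespace Matrix

variable {R : Type*} [CommRing R]

/-- With `0`-based indices the antidiagonal is `k = j.rev`, and `j + k ≤ n` reads `k < j.rev`. -/
structure IsAntitriangularUnit {n : ℕ} (M : Matrix (Fin n) (Fin n) R) : Prop where
  apply_eq_zero : ∀ j k : Fin n, k < j.rev → M j k = 0
  isUnit_apply_rev : ∀ j : Fin n, IsUnit (M j j.rev)

theorem exists_isUnit_apply_of_isUnit_det [IsLocalRing R] {ι : Type*} [Fintype ι]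
    [DecidableEq ι] {M : Matrix ι ι R} (hM : IsUnit M.det) (c : ι) : ∃ r, IsUnit (M r c) := by
  by_contra! h
  have hdet : M.det = ∑ r, adjugate M c r * M r c := by
    simpa [mul_apply] using (congrFun (congrFun (adjugate_mul M) c) c).symm
  refine (IsLocalRing.mem_maximalIdeal _).1 ?_ hM
  rw [hdet]
  exact Ideal.sum_mem _ fun r _ =>
    Ideal.mul_mem_left _ _ ((IsLocalRing.mem_maximalIdeal _).2 (h r))

theorem exists_det_eq_one_isLowerTriangular_mul_apply_eq_zero {ι : Type*} [Fintype ι]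
    [DecidableEq ι] [LinearOrder ι] [OrderTop ι] (A : Matrix ι ι R) {i : ι}
    (hu : IsUnit (A i ⊤)) :
    ∃ c : Matrix ι ι R, c.det = 1 ∧ c.IsLowerTriangular ∧
      (∀ s ≠ ⊤, (A * c) i s = 0) ∧ ∀ r, (A * c) r ⊤ = A r ⊤ := by
  let w : ι → R := fun s => if s = ⊤ then 0 else -(↑hu.unit⁻¹ * A i s)
  let c : Matrix ι ι R := 1 + vecMulVec (Pi.single ⊤ 1) w
  have hAc : ∀ r s, (A * c) r s = A r s + A r ⊤ * w s := by
    intro r s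
    simp [c, mul_add, mul_vecMulVec, vecMulVec_apply]
  have htri : c.IsLowerTriangular := by
    intro r s hrs
    have hr : r ≠ ⊤ := (toDual_lt_toDual.1 hrs).ne_top
    simp [c, vecMulVec_apply, (toDual_lt_toDual.1 hrs).ne, hr]
  refine ⟨c, ?_, htri, fun s hs => ?_, fun r => ?_⟩
  · rw [det_of_isLowerTriangular _ htri]
    refine Finset.prod_eq_one fun r _ => ?_
    by_cases hr : r = ⊤ <;> simp [c, vecMulVec_apply, hr, w]
  · rw [hAc]
    simp only [w, if_neg hs]
    linear_combination (-A i s) * hu.mul_val_inv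
  · simp [hAc, w]

def extendByOne {n : ℕ} (b : Matrix (Fin n) (Fin n) R) : Matrix (Fin (n + 1)) (Fin (n + 1)) R :=
  of (Fin.lastCases (Pi.single (Fin.last n) 1) fun r => Fin.snoc (b r) 0)

section extendByOne

variable {n : ℕ} (b : Matrix (Fin n) (Fin n) R)

@[simp]
theorem extendByOne_castSucc_castSucc (r s : Fin n) :
    extendByOne b r.castSucc s.castSucc = b r s := by
  simp [extendByOne]

@[simp]
theorem extendByOne_castSucc_last (r : Fin n) : extendByOne b r.castSucc (Fin.last n) = 0 := by
  simp [extendByOne]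

@[simp]
theorem extendByOne_last_castSucc (s : Fin n) : extendByOne b (Fin.last n) s.castSucc = 0 := by
  simp [extendByOne, Fin.castSucc_ne_last]

@[simp]
theorem extendByOne_last_last : extendByOne b (Fin.last n) (Fin.last n) = 1 := by
  simp [extendByOne]

theorem det_extendByOne : (extendByOne b).det = b.det := by
  rw [det_succ_row _ (Fin.last n), Fin.sum_univ_castSucc]
  have hminor : (extendByOne b).submatrix Fin.castSucc Fin.castSucc = b := by
    ext r s
    simp
  simp [Fin.succAbove_last, hminor, Even.neg_one_pow ⟨n, rfl⟩]

theorem IsLowerTriangular.extendByOne {b : Matrix (Fin n) (Fin n) R} (hb : b.IsLowerTriangular) :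
    (extendByOne b).IsLowerTriangular := by
  intro r s hrs
  replace hrs : r < s := toDual_lt_toDual.1 hrs
  induction r using Fin.lastCases with
  | last => exact absurd hrs (Fin.le_last s).not_gt
  | cast r =>
    induction s using Fin.lastCases with
    | last => simp
    | cast s => simpa using hb (toDual_lt_toDual.2 (Fin.castSucc_lt_castSucc_iff.1 hrs))

theorem mul_extendByOne_apply_castSucc {m : Type*} (A : Matrix m (Fin (n + 1)) R) (r : m)
    (s : Fin n) : (A * extendByOne b) r s.castSucc = (A.submatrix id Fin.castSucc * b) r s := by
  simp [mul_apply, Fin.sum_univ_castSucc]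

theorem mul_extendByOne_apply_last {m : Type*} (A : Matrix m (Fin (n + 1)) R) (r : m) :
    (A * extendByOne b) r (Fin.last n) = A r (Fin.last n) := by
  simp [mul_apply, Fin.sum_univ_castSucc]

end extendByOne

theorem det_eq_of_apply_castSucc_eq_zero {n : ℕ} (A : Matrix (Fin (n + 1)) (Fin (n + 1)) R)
    {i : Fin (n + 1)} (h : ∀ k : Fin n, A i k.castSucc = 0) :
    A.det = (-1) ^ (i + n : ℕ) * A i (Fin.last n) *
      (A.submatrix i.succAbove Fin.castSucc).det := by
  rw [det_succ_row _ i, Fin.sum_univ_castSucc, Fin.succAbove_last, Fin.val_last]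
  simp [h]

theorem IsAntitriangularUnit.of_submatrix_succ_castSucc {n : ℕ}
    {M : Matrix (Fin (n + 1)) (Fin (n + 1)) R} (h0 : ∀ k : Fin n, M 0 k.castSucc = 0)
    (hu : IsUnit (M 0 (Fin.last n)))
    (h : (M.submatrix Fin.succ Fin.castSucc).IsAntitriangularUnit) :
    M.IsAntitriangularUnit where
  apply_eq_zero j k hk := by
    induction j using Fin.cases with
    | zero =>
      rw [Fin.rev_zero] at hk
      simpa using h0 (k.castPred hk.ne)
    | succ j =>
      rw [Fin.rev_succ] at hk
      have hk' : k ≠ Fin.last n := (hk.trans (Fin.castSucc_lt_last _)).ne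
      simpa using h.apply_eq_zero j (k.castPred hk')
        (Fin.castSucc_lt_castSucc_iff.1 (by rwa [Fin.castSucc_castPred]))
  isUnit_apply_rev j := by
    induction j using Fin.cases with
    | zero => simpa using hu
    | succ j => simpa [Fin.rev_succ] using h.isUnit_apply_rev j

theorem exists_perm_isLowerTriangular_isAntitriangularUnit [IsLocalRing R] :
    ∀ {n : ℕ} (A : Matrix (Fin n) (Fin n) R), IsUnit A.det →
      ∃ (σ : Perm (Fin n)) (b : Matrix (Fin n) (Fin n) R), IsUnit b.det ∧
        b.IsLowerTriangular ∧ ((A * b).submatrix σ id).IsAntitriangularUnit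
  | 0, _, _ => ⟨1, 1, by simp, blockTriangular_one, ⟨fun j => j.elim0, fun j => j.elim0⟩⟩
  | n + 1, A, hA => by
    obtain ⟨i, hi⟩ := exists_isUnit_apply_of_isUnit_det hA (Fin.last n)
    obtain ⟨c, hc_det, hc_tri, hc_row, hc_last⟩ :=
      exists_det_eq_one_isLowerTriangular_mul_apply_eq_zero A (i := i) hi
    simp only [Fin.top_eq_last] at hc_row hc_last
    have hB_row : ∀ k : Fin n, (A * c) i k.castSucc = 0 := fun k => hc_row _ k.castSucc_ne_last
    have hB_minor : IsUnit ((A * c).submatrix i.succAbove Fin.castSucc).det := by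
      have hB : IsUnit (A * c).det := by rwa [det_mul, hc_det, mul_one]
      rw [det_eq_of_apply_castSucc_eq_zero _ hB_row] at hB
      exact isUnit_of_mul_isUnit_right hB
    obtain ⟨σ', b', hb'_det, hb'_tri, hσ'⟩ :=
      exists_perm_isLowerTriangular_isAntitriangularUnit _ hB_minor
    let σ : Perm (Fin (n + 1)) := (Perm.decomposeFin.symm (0, σ')).trans i.cycleRange.symm
    have hσ_zero : σ 0 = i := by simp [σ]
    have hσ_succ (j : Fin n) : σ j.succ = i.succAbove (σ' j) := by simp [σ]
    refine ⟨σ, c * extendByOne b', by rwa [det_mul, hc_det, one_mul, det_extendByOne],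
      hc_tri.mul hb'_tri.extendByOne, ?_⟩
    rw [← Matrix.mul_assoc]
    refine .of_submatrix_succ_castSucc (fun k => ?_) ?_ ?_
    · rw [submatrix_apply, hσ_zero, id, mul_extendByOne_apply_castSucc, mul_apply]
      exact Finset.sum_eq_zero fun m _ => by simp [hB_row]
    · simpa [hσ_zero, mul_extendByOne_apply_last, hc_last] using hi
    · convert hσ' using 1
      ext j k
      simp only [submatrix_apply, id, hσ_succ, mul_extendByOne_apply_castSucc]
      rfl

end Matrix

theorem stmt6_general (𝔬 : Type*) [CommRing 𝔬] [IsDomain 𝔬] [IsDiscreteValuationRing 𝔬]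
    (n : ℕ)
    (α : Matrix (Fin n) (Fin n) 𝔬) (hα : IsUnit α.det) :
    ∃ (P b : Matrix (Fin n) (Fin n) 𝔬),
      (∃ σ : Equiv.Perm (Fin n), P = σ.permMatrix 𝔬) ∧
      IsUnit b.det ∧
      (∀ i j : Fin n, i < j → b i j = 0) ∧
      (∀ j k : Fin n, ((j : ℕ) + 1) + ((k : ℕ) + 1) ≤ n → (P * α * b) j k = 0) ∧
      (∀ j : Fin n, IsUnit ((P * α * b) j (Fin.rev j))) := by
  obtain ⟨σ, b, hb_det, hb_tri, hσ⟩ :=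
    Matrix.exists_perm_isLowerTriangular_isAntitriangularUnit α hα
  have hP : σ.permMatrix 𝔬 * α * b = (α * b).submatrix σ id := by
    rw [Matrix.mul_assoc, Equiv.Perm.permMatrix, PEquiv.toMatrix_toPEquiv_mul]
  refine ⟨σ.permMatrix 𝔬, b, ⟨σ, rfl⟩, hb_det,
    fun i j hij => hb_tri (toDual_lt_toDual.2 hij), fun j k hjk => ?_,
    fun j => hP ▸ hσ.isUnit_apply_rev j⟩
  rw [hP]
  exact hσ.apply_eq_zero j k (by rw [Fin.lt_def, Fin.val_rev]; omega)

theorem stmt6 (𝔬 : Type*) [CommRing 𝔬] [IsDomain 𝔬] [IsDiscreteValuationRing 𝔬]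
    (n : ℕ) (hn : 1 ≤ n)
    (α : Matrix (Fin n) (Fin n) 𝔬) (hα : IsUnit α.det) :
    ∃ (P b : Matrix (Fin n) (Fin n) 𝔬),
      (∃ σ : Equiv.Perm (Fin n), P = σ.permMatrix 𝔬) ∧
      IsUnit b.det ∧
      (∀ i j : Fin n, i < j → b i j = 0) ∧
      (∀ j k : Fin n, ((j : ℕ) + 1) + ((k : ℕ) + 1) ≤ n → (P * α * b) j k = 0) ∧
      (∀ j : Fin n, IsUnit ((P * α * b) j (Fin.rev j))) :=
  stmt6_general 𝔬 n α hα
end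

section
/- Let m, n ≥ 1 be integers and define, in the field ℚ(X,T) of rational functions in two variables over ℚ, W_{m,n}(X,T) = [∑_{w∈Sₙ} X^{−ℓ(w)} ∏_{j∈Des(w)} X^{a_{n−j}(m,n)} T^{b_{n−j}(m,n)}] / [∏_{i=0}^{d(m,n)−1}(1 − X^i T) · ∏_{i=0}^{n−1}(1 − X^{a_i(m,n)} T^{b_i(m,n)})]. Then, under the ℚ-field automorphism of ℚ(X,T) sending X ↦ X^{−1} and T ↦ T^{−1}, one has W_{m,n}(X^{−1}, T^{−1}) = (−1)^{h(m,n)} X^{h(m,n)(h(m,n)−1)/2} T^{d(m,n)+h(m,n)} · W_{m,n}(X,T). -/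
open scoped BigOperators

/-- `a_i(m,n) = (n-i)(i+d(m,n))`. -/
def aN (m n i : ℕ) : ℕ := (n - i) * (i + dN m n)

/-- `b_i(m,n) = n - i + e(m,n) + ∑_{j=i+1}^n e(m,j)`. -/
def bN (m n i : ℕ) : ℕ := n - i + eN m n + ∑ j ∈ Finset.Icc (i + 1) n, eN m j

/-- The values of `w ∈ Sₙ` as a function on `{0,…,n-1}` (0-based), extended by the
identity outside this range. -/
def permVal {n : ℕ} (w : Equiv.Perm (Fin n)) (t : ℕ) : ℕ :=
  if h : t < n then (w ⟨t, h⟩ : ℕ) else t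

/-- `ℓ(w)`, the number of inversions (Coxeter length) of `w ∈ Sₙ`. -/
def lenP {n : ℕ} (w : Equiv.Perm (Fin n)) : ℕ :=
  ((Finset.range n ×ˢ Finset.range n).filter fun p =>
    p.1 < p.2 ∧ permVal w p.2 < permVal w p.1).card

/-- `Des(w) = {i ∈ {1,…,n-1} : w(i+1) < w(i)}`, the descent set of `w ∈ Sₙ`
(in 1-based positions). -/
def desP {n : ℕ} (w : Equiv.Perm (Fin n)) : Finset ℕ :=
  (Finset.Icc 1 (n - 1)).filter fun j => permVal w j < permVal w (j - 1)

/-- The rational expression `W_{m,n}(x,t)`, evaluated at elements `x`, `t` of a field. -/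
noncomputable def Wfun (m n : ℕ) {K : Type*} [Field K] (x t : K) : K :=
  (∑ w : Equiv.Perm (Fin n),
      (x ^ lenP w)⁻¹ * ∏ j ∈ desP w, x ^ aN m n (n - j) * t ^ bN m n (n - j)) /
    ((∏ i ∈ Finset.range (dN m n), (1 - x ^ i * t)) *
      ∏ i ∈ Finset.range n, (1 - x ^ aN m n i * t ^ bN m n i))

/-- The variable `X` in the rational function field `ℚ(X,T)`. -/
noncomputable def Xvar : FractionRing (MvPolynomial (Fin 2) ℚ) :=
  algebraMap (MvPolynomial (Fin 2) ℚ) (FractionRing (MvPolynomial (Fin 2) ℚ))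
    (MvPolynomial.X 0)

/-- The variable `T` in the rational function field `ℚ(X,T)`. -/
noncomputable def Tvar : FractionRing (MvPolynomial (Fin 2) ℚ) :=
  algebraMap (MvPolynomial (Fin 2) ℚ) (FractionRing (MvPolynomial (Fin 2) ℚ))
    (MvPolynomial.X 1)

/-!
Each denominator factor satisfies `1 - u⁻¹ = -u⁻¹ (1 - u)`, so inverting `X` and `T` multiplies
the denominator by `(-1)^(d+n) = (-1)^h` times a monomial. In the numerator, replacing `w` by
`w₀ w` (`w₀` the longest element) sends `ℓ(w)` to `binom(n,2) - ℓ(w)` and `Des(w)` to its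
complement in `{1, …, n-1}`, so the numerator is multiplied by a monomial as well. The monomials
combine to `X^binom(h,2) T^(d+h)` because `a₀ = n d` and `b₀ = h`, the latter by the hockey-stick
identity `∑_{j=1}^n e(m,j) = f(m,n)`. Both sides being multiples of the same quotient, the
identity holds even where a denominator vanishes and the division returns `0`.
-/

open Finset

section Inversions

variable {n : ℕ}

lemma permVal_lt (w : Equiv.Perm (Fin n)) {t : ℕ} (ht : t < n) : permVal w t < n := by
  rw [permVal, dif_pos ht]
  exact (w ⟨t, ht⟩).isLt

lemma permVal_ne (w : Equiv.Perm (Fin n)) {s t : ℕ} (hs : s < n) (ht : t < n) (hst : s ≠ t) :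
    permVal w s ≠ permVal w t := by
  rw [permVal, permVal, dif_pos hs, dif_pos ht, ne_eq, ← Fin.ext_iff, w.apply_eq_iff_eq,
    Fin.mk.injEq]
  exact hst

lemma permVal_revPerm_mul (w : Equiv.Perm (Fin n)) {t : ℕ} (ht : t < n) :
    permVal (Fin.revPerm * w) t = n - (permVal w t + 1) := by
  rw [permVal, permVal, dif_pos ht, dif_pos ht]
  exact Fin.val_rev _

lemma permVal_revPerm_mul_lt_iff (w : Equiv.Perm (Fin n)) {s t : ℕ} (hs : s < n) (ht : t < n)
    (hst : s ≠ t) :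
    permVal (Fin.revPerm * w) s < permVal (Fin.revPerm * w) t ↔ ¬ permVal w s < permVal w t := by
  have := permVal_ne w hs ht hst
  have := permVal_lt w hs
  have := permVal_lt w ht
  rw [permVal_revPerm_mul w hs, permVal_revPerm_mul w ht]
  omega

def orderedPairs (n : ℕ) : Finset (ℕ × ℕ) :=
  (range n ×ˢ range n).filter fun p => p.1 < p.2

lemma card_orderedPairs (n : ℕ) : #(orderedPairs n) = ∑ j ∈ range n, j := by
  rw [orderedPairs, card_filter, sum_product_right]
  refine sum_congr rfl fun j hj => ?_
  have hjn := mem_range.1 hj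
  rw [← card_filter, (by ext i; simp only [mem_filter, mem_range]; omega :
    (range n).filter (· < j) = range j), card_range]

lemma lenP_eq_card_filter_orderedPairs (w : Equiv.Perm (Fin n)) :
    lenP w = #((orderedPairs n).filter fun p => permVal w p.2 < permVal w p.1) := by
  rw [lenP, orderedPairs, filter_filter]

lemma lenP_le (w : Equiv.Perm (Fin n)) : lenP w ≤ ∑ j ∈ range n, j := by
  rw [lenP_eq_card_filter_orderedPairs, ← card_orderedPairs]
  exact card_filter_le _ _

lemma lenP_revPerm_mul (w : Equiv.Perm (Fin n)) :
    lenP (Fin.revPerm * w) = ∑ j ∈ range n, j - lenP w := by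
  rw [lenP_eq_card_filter_orderedPairs, lenP_eq_card_filter_orderedPairs, ← card_orderedPairs,
    ← card_sdiff_of_subset (filter_subset _ _)]
  congr 1
  ext p
  simp only [orderedPairs, mem_filter, mem_sdiff, mem_product, mem_range]
  constructor
  · rintro ⟨⟨⟨hp1, hp2⟩, hlt⟩, hinv⟩
    exact ⟨⟨⟨hp1, hp2⟩, hlt⟩, fun h => (permVal_revPerm_mul_lt_iff w hp2 hp1 hlt.ne').1 hinv h.2⟩
  · rintro ⟨⟨⟨hp1, hp2⟩, hlt⟩, hninv⟩
    exact ⟨⟨⟨hp1, hp2⟩, hlt⟩,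
      (permVal_revPerm_mul_lt_iff w hp2 hp1 hlt.ne').2 fun h => hninv ⟨⟨⟨hp1, hp2⟩, hlt⟩, h⟩⟩

lemma desP_subset (w : Equiv.Perm (Fin n)) : desP w ⊆ Icc 1 (n - 1) :=
  filter_subset _ _

lemma desP_revPerm_mul (w : Equiv.Perm (Fin n)) :
    desP (Fin.revPerm * w) = Icc 1 (n - 1) \ desP w := by
  ext j
  simp only [desP, mem_filter, mem_sdiff, mem_Icc, and_congr_right_iff]
  intro hj
  rw [permVal_revPerm_mul_lt_iff w (by omega) (by omega) (by omega)]
  simp [hj]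

end Inversions

theorem sum_perm_pow_lenP_mul_prod_desP_inv {K : Type*} [Field K] (n : ℕ) {x : K} (hx : x ≠ 0)
    {c : ℕ → K} (hc : ∀ j, c j ≠ 0) :
    ∑ w : Equiv.Perm (Fin n), x ^ lenP w * ∏ j ∈ desP w, (c j)⁻¹ =
      x ^ (∑ j ∈ range n, j) * (∏ j ∈ Icc 1 (n - 1), c j)⁻¹ *
        ∑ w : Equiv.Perm (Fin n), (x ^ lenP w)⁻¹ * ∏ j ∈ desP w, c j := by
  rw [mul_sum]
  refine Fintype.sum_equiv (Equiv.mulLeft Fin.revPerm) _ _ fun w => ?_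
  rw [Equiv.coe_mulLeft, lenP_revPerm_mul, desP_revPerm_mul, pow_sub₀ x hx (lenP_le w),
    ← prod_sdiff (desP_subset w), prod_inv_distrib]
  have : ∏ j ∈ Icc 1 (n - 1) \ desP w, c j ≠ 0 := prod_ne_zero_iff.2 fun j _ => hc j
  field_simp

lemma prod_one_sub_inv {ι K : Type*} [Field K] (s : Finset ι) {u : ι → K}
    (hu : ∀ i ∈ s, u i ≠ 0) :
    ∏ i ∈ s, (1 - (u i)⁻¹) = (-1) ^ #s * (∏ i ∈ s, u i)⁻¹ * ∏ i ∈ s, (1 - u i) := by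
  rw [← prod_const, ← prod_inv_distrib, ← prod_mul_distrib, ← prod_mul_distrib]
  refine prod_congr rfl fun i hi => ?_
  field_simp [hu i hi]
  ring

lemma prod_range_eq_mul_prod_Icc_sub {M : Type*} [CommMonoid M] {n : ℕ} (hn : 1 ≤ n)
    (f : ℕ → M) : ∏ i ∈ range n, f i = f 0 * ∏ j ∈ Icc 1 (n - 1), f (n - j) := by
  obtain ⟨k, rfl⟩ := Nat.exists_eq_add_of_le' hn
  rw [prod_range_succ', mul_comm]
  congr 1
  refine prod_nbij' (fun i => k - i) (fun j => k - j) ?_ ?_ ?_ ?_ ?_ <;>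
    simp only [mem_range, mem_Icc] <;> intros <;> first | omega | congr 1; omega

lemma sum_Icc_eN (m : ℕ) {n : ℕ} (hn : 1 ≤ n) : ∑ j ∈ Icc 1 n, eN m j = fN m n := by
  induction n, hn using Nat.le_induction with
  | base => simp [eN, fN]
  | succ n hn ih =>
    obtain ⟨k, rfl⟩ := Nat.exists_eq_add_of_le' hn
    rw [sum_Icc_succ_top (by omega), ih, eN, fN, fN, Nat.add_sub_cancel, Nat.add_sub_cancel,
      show k + 1 + 1 + m - 1 = (k + m) + 1 by omega, show k + 1 + 1 + m - 2 = k + m by omega,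
      show k + 1 + m - 1 = k + m by omega, Nat.choose_succ_succ']

lemma bN_zero (m : ℕ) {n : ℕ} (hn : 1 ≤ n) : bN m n 0 = hN m n := by
  rw [bN, hN, dN, zero_add, sum_Icc_eN m hn]
  omega

lemma aN_zero (m n : ℕ) : aN m n 0 = n * dN m n := by
  simp [aN]

lemma sum_range_id_add (p q : ℕ) :
    ∑ i ∈ range (p + q), i = ∑ i ∈ range p, i + ∑ i ∈ range q, i + p * q := by
  rw [sum_range_add, sum_add_distrib, sum_const, card_range, smul_eq_mul]
  ring

theorem Wfun_inv_inv (m : ℕ) {n : ℕ} (hn : 1 ≤ n) {K : Type*} [Field K] {x t : K} (hx : x ≠ 0)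
    (ht : t ≠ 0) :
    Wfun m n x⁻¹ t⁻¹ = (-1) ^ hN m n * x ^ (hN m n * (hN m n - 1) / 2) *
      t ^ (dN m n + hN m n) * Wfun m n x t := by
  have hmon : ∀ a b, x ^ a * t ^ b ≠ 0 := fun _ _ =>
    mul_ne_zero (pow_ne_zero _ hx) (pow_ne_zero _ ht)
  have hnum := sum_perm_pow_lenP_mul_prod_desP_inv n hx
    (c := fun j => x ^ aN m n (n - j) * t ^ bN m n (n - j)) fun j => hmon _ _
  have hden₁ := prod_one_sub_inv (range (dN m n)) (u := fun i => x ^ i * t ^ 1)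
    fun i _ => hmon _ _
  have hden₂ := prod_one_sub_inv (range n) (u := fun i => x ^ aN m n i * t ^ bN m n i)
    fun i _ => hmon _ _
  simp only [pow_one] at hden₁
  rw [prod_range_eq_mul_prod_Icc_sub hn fun i => x ^ aN m n i * t ^ bN m n i, card_range,
    aN_zero, bN_zero m hn] at hden₂
  rw [prod_mul_distrib, prod_pow_eq_pow_sum, prod_const, card_range] at hden₁
  have hexp :
      hN m n * (hN m n - 1) / 2 = ∑ i ∈ range n, i + ∑ i ∈ range (dN m n), i + n * dN m n := by
    rw [← sum_range_id, hN, add_comm, sum_range_id_add]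
  simp only [Wfun, inv_pow, inv_inv, ← mul_inv]
  rw [hnum, hden₁, hden₂, hexp]
  have hP : ∏ j ∈ Icc 1 (n - 1), x ^ aN m n (n - j) * t ^ bN m n (n - j) ≠ 0 :=
    prod_ne_zero_iff.2 fun j _ => hmon _ _
  generalize ∏ j ∈ Icc 1 (n - 1), x ^ aN m n (n - j) * t ^ bN m n (n - j) = P at hP ⊢
  generalize ∑ w : Equiv.Perm (Fin n), (x ^ lenP w)⁻¹ *
    ∏ j ∈ desP w, x ^ aN m n (n - j) * t ^ bN m n (n - j) = N
  generalize ∏ i ∈ range (dN m n), (1 - x ^ i * t) = D₁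
  generalize ∏ i ∈ range n, (1 - x ^ aN m n i * t ^ bN m n i) = D₂
  rw [hN, pow_add]
  field_simp
  ring_nf
  simp only [pow_mul', neg_one_sq, one_pow, mul_one]

theorem stmt12_general (m n : ℕ) (hn : 1 ≤ n) :
    Wfun m n Xvar⁻¹ Tvar⁻¹ =
      (-1) ^ hN m n * Xvar ^ (hN m n * (hN m n - 1) / 2) * Tvar ^ (dN m n + hN m n) *
        Wfun m n Xvar Tvar := by
  have hX : ∀ i, algebraMap (MvPolynomial (Fin 2) ℚ) (FractionRing (MvPolynomial (Fin 2) ℚ))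
      (MvPolynomial.X i) ≠ 0 :=
    fun i => (map_ne_zero_iff _ (IsFractionRing.injective _ _)).2 (MvPolynomial.X_ne_zero i)
  exact Wfun_inv_inv m hn (hX 0) (hX 1)

theorem stmt12 (m n : ℕ) (hm : 1 ≤ m) (hn : 1 ≤ n) :
    Wfun m n Xvar⁻¹ Tvar⁻¹ =
      (-1) ^ hN m n * Xvar ^ (hN m n * (hN m n - 1) / 2) * Tvar ^ (dN m n + hN m n) *
        Wfun m n Xvar Tvar :=
  stmt12_general m n hn
end

section
/- Let m, n ≥ 1 be integers and set d = d(m,n), h = h(m,n), and for i = 0,…,n−1, a_i = a_i(m,n), b_i = b_i(m,n). Define the topological ideal zeta function ζ_top(s) = n! / (∏_{j=0}^{d−1}(s−j) · ∏_{i=0}^{n−1}(b_i s − a_i)) for real s where the denominator is nonzero. Then s·ζ_top(s) tends to (−1)^{h−1}/(h−1)! as s tends to 0; i.e., ζ_top has a simple pole at s = 0 with residue (−1)^{h(m,n)−1}/(h(m,n)−1)!. -/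
open scoped BigOperators

/-- The topological ideal zeta function `ζ^◁_{L_{m,n},top}(s)`. -/
noncomputable def zetaTop (m n : ℕ) (s : ℝ) : ℝ :=
  (n.factorial : ℝ) /
    ((∏ j ∈ Finset.range (dN m n), (s - (j : ℝ))) *
      ∏ i ∈ Finset.range n, ((bN m n i : ℝ) * s - (aN m n i : ℝ)))

/-!
The factor `j = 0` of the denominator of `ζ_top` is `s`, so `s · ζ_top(s) = n! / R(s)` with `R`
a polynomial, and the limit is `n! / R(0)`. At `s = 0` the remaining factors give
`R(0) = (-1)^(d-1) (d-1)! · (-1)^n ∏ a_i`, and `∏ (n-i)(i+d) = n! · d(d+1)⋯(d+n-1)`, whence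
`R(0) = (-1)^(h-1) n! (h-1)!`.
-/

open Finset Filter Topology Nat

lemma prod_range_sub_mul_add (n d : ℕ) :
    ∏ i ∈ range n, (n - i) * (i + d) = n ! * d.ascFactorial n := by
  simp_rw [prod_mul_distrib, ← descFactorial_eq_prod_range, descFactorial_self,
    ascFactorial_eq_prod_range, add_comm]

lemma prod_range_neg_succ {R : Type*} [CommRing R] (k : ℕ) :
    ∏ j ∈ range k, ((0 : R) - (j + 1)) = (-1) ^ k * (k ! : R) := by
  simp_rw [zero_sub, prod_neg, card_range, ← prod_range_add_one_eq_factorial, cast_prod,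
    cast_add_one]

lemma one_le_dN (m n : ℕ) : 1 ≤ dN m n :=
  (choose_pos (by omega : n - 1 ≤ n + m - 1)).trans_le (Nat.le_add_left _ _)

noncomputable def zetaTopReducedDenom (m n : ℕ) (s : ℝ) : ℝ :=
  (∏ j ∈ range (dN m n - 1), (s - (j + 1))) *
    ∏ i ∈ range n, ((bN m n i : ℝ) * s - (aN m n i : ℝ))

lemma zetaTop_eq (m n : ℕ) (s : ℝ) :
    zetaTop m n s = n ! / (s * zetaTopReducedDenom m n s) := by
  obtain ⟨k, hk⟩ := Nat.exists_eq_add_of_le' (one_le_dN m n)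
  simp [zetaTop, zetaTopReducedDenom, hk, prod_range_succ', mul_assoc, mul_comm s]

lemma continuous_zetaTopReducedDenom (m n : ℕ) : Continuous (zetaTopReducedDenom m n) := by
  unfold zetaTopReducedDenom; fun_prop

lemma zetaTopReducedDenom_zero (m n : ℕ) :
    zetaTopReducedDenom m n 0 = (-1) ^ (hN m n - 1) * (n ! * (hN m n - 1)! : ℕ) := by
  obtain ⟨k, hk⟩ := Nat.exists_eq_add_of_le' (one_le_dN m n)
  have hh : hN m n - 1 = k + n := by rw [hN, hk]; omega
  have ha : ∏ i ∈ range n, (aN m n i : ℝ) = (n ! * (k + 1).ascFactorial n : ℕ) := by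
    rw [← prod_range_sub_mul_add, ← hk, cast_prod]; rfl
  have hfac : k ! * (n ! * (k + 1).ascFactorial n) = n ! * (k + n)! := by
    rw [← factorial_mul_ascFactorial]; ring
  simp_rw [zetaTopReducedDenom, hk, add_tsub_cancel_right, prod_range_neg_succ, mul_zero, zero_sub,
    prod_neg, card_range, ha, hh, pow_add, ← hfac]
  push_cast
  ring

theorem stmt17_general (m n : ℕ) :
    Filter.Tendsto (fun s : ℝ => s * zetaTop m n s)
      (nhdsWithin 0 {(0 : ℝ)}ᶜ)
      (nhds ((-1) ^ (hN m n - 1) / ((hN m n - 1).factorial : ℝ))) := by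
  have h0 : zetaTopReducedDenom m n 0 ≠ 0 := by rw [zetaTopReducedDenom_zero]; positivity
  have hlim : Tendsto (fun s => (n ! : ℝ) / zetaTopReducedDenom m n s) (𝓝[≠] 0)
      (𝓝 ((n ! : ℝ) / zetaTopReducedDenom m n 0)) :=
    (tendsto_const_nhds.div ((continuous_zetaTopReducedDenom m n).tendsto 0) h0).mono_left
      nhdsWithin_le_nhds
  have hval : (n ! : ℝ) / zetaTopReducedDenom m n 0 = (-1) ^ (hN m n - 1) / (hN m n - 1)! := by
    rw [zetaTopReducedDenom_zero, cast_mul]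
    field_simp
    rw [← pow_mul, Even.neg_one_pow ⟨_, mul_two _⟩]
  rw [← hval]
  refine hlim.congr' (eventually_nhdsWithin_of_forall fun s (hs : s ≠ 0) => ?_)
  show _ = s * zetaTop m n s
  rw [zetaTop_eq, mul_div_assoc', mul_div_mul_left _ _ hs]

theorem stmt17 (m n : ℕ) (hm : 1 ≤ m) (hn : 1 ≤ n) :
    Filter.Tendsto (fun s : ℝ => s * zetaTop m n s)
      (nhdsWithin 0 {(0 : ℝ)}ᶜ)
      (nhds ((-1) ^ (hN m n - 1) / ((hN m n - 1).factorial : ℝ))) :=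
  stmt17_general m n
end
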